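/- arXiv:1412.8330 — 6 statements merged into one kernel-verified Lean document; each statement's English description precedes it below -/
import Mathlib

section
/- For all natural numbers d and all j with 0 ≤ j ≤ d, the sum ∑_{k=0}^{d} (-1)^k · C(2k, j) · C(2d-2k, d-j) · C(d, k) equals (-1)^j · 2^d · C(d, j), where C(n,m) denotes the binomial coefficient. -/
/-!
With `x` the inner and `Y` the outer variable of `ℤ[X][X]`, the sum is the coefficient of
`x ^ j * Y ^ (d - j)` in `∑ₖ (-1)ᵏ C(d,k) (1 + x)^(2k) (1 + Y)^(2(d-k)) = ((1 + Y)² - (1 + x)²)ᵈ`,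
which factors as `(Y - x)ᵈ (Y + x + 2)ᵈ`. The first factor is homogeneous of degree `d`, so a
monomial of total degree `d` only sees the constant term `2ᵈ` of the second one.
-/

open Polynomial Finset

theorem sum_range_neg_one_pow_mul_choose_smul_pow {R : Type*} [CommRing R] (a b : R) (d : ℕ) :
    ∑ k ∈ range (d + 1), ((-1) ^ k * d.choose k : ℤ) • (a ^ k * b ^ (d - k)) = (b - a) ^ d := by
  rw [sub_eq_neg_add, add_pow]
  refine sum_congr rfl fun k _ => ?_
  rw [neg_pow]
  push_cast [zsmul_eq_mul]
  ring

theorem coeff_coeff_C_X_add_one_pow_mul_X_add_one_pow {R : Type*} [Semiring R] (m n a b : ℕ) :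
    ((C ((X + 1) ^ m) * (X + 1) ^ n : R[X][X]).coeff a).coeff b = m.choose b * n.choose a := by
  rw [coeff_C_mul, coeff_X_add_one_pow, coeff_mul_natCast, coeff_X_add_one_pow]

theorem coeff_coeff_X_sub_C_X_pow_mul {R : Type*} [CommRing R] (Q : R[X][X]) {i j d : ℕ}
    (h : i + j = d) :
    (((X - C X) ^ d * Q).coeff i).coeff j = (-1 : R) ^ j * d.choose j * (Q.coeff 0).coeff 0 := by
  have hcoeff (p : ℕ) :
      ((X - C X) ^ d : R[X][X]).coeff p = X ^ (d - p) * C ((-1 : R) ^ (d - p) * d.choose p) := by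
    rw [sub_eq_add_neg, ← C_neg, coeff_X_add_C_pow, neg_pow]
    simp only [map_mul, map_pow, map_neg, map_one, map_natCast]
    ring
  rw [coeff_mul, finsetSum_coeff, sum_eq_single (i, 0)]
  · rw [hcoeff, mul_assoc, show d - i = j by omega, coeff_X_pow_mul', if_pos le_rfl,
      Nat.sub_self, coeff_C_mul, ← Nat.choose_symm_of_eq_add h.symm]
  · rintro ⟨p, q⟩ hpq hne
    rw [HasAntidiagonal.mem_antidiagonal] at hpq
    have hq : q ≠ 0 := by
      rintro rfl
      simp_all
    rw [hcoeff, mul_assoc, coeff_X_pow_mul', if_neg (by omega)]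
  · simp

theorem stmt0 (d j : ℕ) (hj : j ≤ d) :
    ∑ k ∈ Finset.range (d + 1),
      ((-1 : ℤ) ^ k * (Nat.choose (2 * k) j) * (Nat.choose (2 * d - 2 * k) (d - j)) *
        (Nat.choose d k))
      = (-1 : ℤ) ^ j * 2 ^ d * (Nat.choose d j) := by
  have hfactor : ((X + 1) ^ 2 - C ((X + 1) ^ 2) : ℤ[X][X]) = (X - C X) * (X + C X + 2) := by
    simp only [map_pow, map_add, map_one]
    ring
  have key := congrArg (fun P : ℤ[X][X] => (P.coeff (d - j)).coeff j)
    (sum_range_neg_one_pow_mul_choose_smul_pow (C ((X + 1) ^ 2)) ((X + 1) ^ 2) d)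
  simp only [hfactor, mul_pow, finsetSum_coeff, coeff_smul] at key
  rw [coeff_coeff_X_sub_C_X_pow_mul _ (Nat.sub_add_cancel hj)] at key
  convert key using 1
  · refine sum_congr rfl fun k _ => ?_
    rw [← map_pow, ← pow_mul, ← pow_mul, coeff_coeff_C_X_add_one_pow_mul_X_add_one_pow,
      smul_eq_mul, Nat.mul_sub]
    ring
  · simp only [coeff_zero_eq_eval_zero, eval_pow, eval_add, eval_X, eval_C, zero_add,
      eval_ofNat]
    ring
end

section
/- Let S(d, j) = ∑_{k=0}^{d} (-1)^k · C(2k, j) · C(2d-2k, d-j) · C(d, k). Then for all d ≥ 1 and 1 ≤ j ≤ d, one has j · S(d, j) = -2d · S(d-1, j-1). -/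
/-!
Expanding `((1 + y)^2 - (1 + x)^2)^d` binomially shows that `S d j` is its coefficient of
`x^j y^(d-j)`. Factoring it as `(y - x)^d (y + x + 2)^d`, a monomial of total degree `d` can only
come from `(y - x)^d` times the constant term `2^d` of the second factor, so
`S d j = (-1)^j C(d,j) 2^d`. The recurrence is then the absorption identity
`j C(d,j) = d C(d-1,j-1)`.
-/

/-- `S d j = ∑_{k=0}^{d} (-1)^k C(2k,j) C(2d-2k,d-j) C(d,k)`. -/
def S (d j : ℕ) : ℤ :=
  ∑ k ∈ Finset.range (d + 1),
    (-1 : ℤ) ^ k * (Nat.choose (2 * k) j) * (Nat.choose (2 * d - 2 * k) (d - j)) *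
      (Nat.choose d k)

open Polynomial

section GenPoly

variable (R : Type*) [CommRing R]

/-- `((1 + y)^2 - (1 + x)^2)^d`, with `x` the inner and `y` the outer variable of `R[X][X]`. -/
noncomputable def genPoly (d : ℕ) : R[X][X] :=
  ((X + 1) ^ 2 - C (X + 1) ^ 2) ^ d

lemma coeff_coeff_genPoly_eq_sum (d j : ℕ) :
    ((genPoly R d).coeff (d - j)).coeff j = ∑ k ∈ Finset.range (d + 1),
      (-1 : R) ^ k * (2 * k).choose j * (2 * d - 2 * k).choose (d - j) * d.choose k := by
  have hterm (k : ℕ) :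
      (-C (X + 1 : R[X]) ^ 2) ^ k * ((X + 1) ^ 2) ^ (d - k) * (d.choose k : R[X][X]) =
        C (C ((-1) ^ k * (d.choose k : R)) * (X + 1) ^ (2 * k)) * (X + 1) ^ (2 * d - 2 * k) := by
    rw [← Nat.mul_sub, pow_mul, pow_mul]
    simp only [map_mul, map_pow, map_neg, map_one, map_natCast]
    ring
  rw [genPoly, sub_eq_neg_add, add_pow, finsetSum_coeff, finsetSum_coeff]
  refine Finset.sum_congr rfl fun k _ => ?_
  rw [hterm, coeff_C_mul, coeff_X_add_one_pow, ← C_eq_natCast, coeff_mul_C, coeff_C_mul,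
    coeff_X_add_one_pow]
  ring

lemma genPoly_eq_mul (d : ℕ) :
    genPoly R d = (X + C (-X)) ^ d * (X + C (X + 2)) ^ d := by
  rw [genPoly, ← mul_pow]
  congr 1
  simp only [map_add, map_neg, map_one, map_ofNat]
  ring

lemma coeff_coeff_genPoly {d j : ℕ} (hjd : j ≤ d) :
    ((genPoly R d).coeff (d - j)).coeff j = (-1) ^ j * d.choose j * 2 ^ d := by
  have hterm (a b : ℕ) :
      ((X + C (-X)) ^ d).coeff a * ((X + C (X + 2)) ^ d).coeff b =
        X ^ (d - a) * (C ((-1) ^ (d - a) * d.choose a * d.choose b : R) * (X + C 2) ^ (d - b)) := by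
    rw [coeff_X_add_C_pow, coeff_X_add_C_pow, neg_pow]
    simp only [map_mul, map_pow, map_neg, map_one, map_natCast, map_ofNat]
    ring
  rw [genPoly_eq_mul, coeff_mul, finsetSum_coeff,
    Finset.sum_eq_single_of_mem (d - j, 0) (by simp)]
  · rw [hterm, coeff_X_pow_mul', if_pos (by omega), coeff_C_mul, coeff_X_add_C_pow,
      Nat.sub_sub_self hjd, Nat.choose_symm hjd]
    simp
  · rintro ⟨a, b⟩ hab hne
    simp only [Finset.HasAntidiagonal.mem_antidiagonal, ne_eq, Prod.mk.injEq] at hab hne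
    rw [hterm, coeff_X_pow_mul', if_neg (by omega)]

end GenPoly

lemma S_eq_neg_one_pow_mul_choose_mul_two_pow {d j : ℕ} (hjd : j ≤ d) :
    S d j = (-1) ^ j * d.choose j * 2 ^ d := by
  rw [S, ← coeff_coeff_genPoly_eq_sum, coeff_coeff_genPoly ℤ hjd]

theorem stmt1_general (d j : ℕ) (hj1 : 1 ≤ j) (hjd : j ≤ d) :
    (j : ℤ) * S d j = -(2 * (d : ℤ)) * S (d - 1) (j - 1) := by
  obtain ⟨e, rfl⟩ : ∃ e, d = e + 1 := ⟨d - 1, by omega⟩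
  obtain ⟨i, rfl⟩ : ∃ i, j = i + 1 := ⟨j - 1, by omega⟩
  have absorption : ((e + 1 : ℕ) : ℤ) * e.choose i = (e + 1).choose (i + 1) * (i + 1 : ℕ) := by
    exact_mod_cast Nat.add_one_mul_choose_eq e i
  rw [Nat.add_sub_cancel, Nat.add_sub_cancel, S_eq_neg_one_pow_mul_choose_mul_two_pow hjd,
    S_eq_neg_one_pow_mul_choose_mul_two_pow (by omega)]
  push_cast at absorption ⊢
  linear_combination 2 * 2 ^ e * (-1) ^ i * absorption

theorem stmt1 (d j : ℕ) (hd : 1 ≤ d) (hj1 : 1 ≤ j) (hjd : j ≤ d) :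
    (j : ℤ) * S d j = -(2 * (d : ℤ)) * S (d - 1) (j - 1) :=
  stmt1_general d j hj1 hjd
end

section
/- For every natural number d, ∑_{k=0}^{d} (-1)^k · C(2k, 0) · C(2d-2k, d) · C(d, k) = 2^d; equivalently, ∑_{k=0}^{d} (-1)^k · C(2d-2k, d) · C(d, k) = 2^d. -/
open Polynomial Finset

theorem stmt2 (d : ℕ) :
    ∑ k ∈ Finset.range (d + 1),
      ((-1 : ℤ) ^ k * (Nat.choose (2 * d - 2 * k) d) * (Nat.choose d k)) = 2 ^ d := by
  have key : ((-1 + (X + 1) ^ 2 : ℤ[X])) ^ d = X ^ d * (X + 2) ^ d := by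
    rw [← mul_pow]; ring_nf
  have h1 : (((-1 + (X + 1) ^ 2 : ℤ[X])) ^ d).coeff d = 2 ^ d := by
    rw [key]
    have := Polynomial.coeff_X_pow_mul ((X + 2 : ℤ[X]) ^ d) d 0
    simp only [zero_add] at this
    rw [this, Polynomial.coeff_zero_eq_eval_zero]
    simp
  rw [← h1, add_pow, Polynomial.finset_sum_coeff]
  refine Finset.sum_congr rfl fun k hk => ?_
  have hk' : k ≤ d := by simpa using Nat.lt_succ_iff.mp (Finset.mem_range.mp hk)
  have h2 : (2 * d - 2 * k) = 2 * (d - k) := by omega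
  have : ((-1 : ℤ[X]) ^ k * ((X + 1) ^ 2) ^ (d - k) * (d.choose k : ℤ[X]))
      = Polynomial.C ((-1) ^ k * (d.choose k : ℤ)) * (X + 1) ^ (2 * (d - k)) := by
    rw [map_mul, map_pow, map_neg, map_one, map_natCast, ← pow_mul]
    ring
  rw [this, Polynomial.coeff_C_mul, Polynomial.coeff_X_add_one_pow, h2]
  ring
end

section
/- Let d be a natural number and m₀ an integer with |m₀| = d. Define x_{j,k} = (-1)^{j+k} · ε^j · C(d, 2k-j) for 0 ≤ j, k ≤ d, where ε = sgn(m₀)·i (i the imaginary unit) and C(d, n) = 0 when n < 0 or n > d. Then ∑_{k=0}^{d} x_{j,k} · B(k + 1/2, d - k + 1/2) = ε^j · 2^{-d} · π, where B is the Beta function. -/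
/-!
By `B(s, t) = Γ(s) Γ(t) / Γ(s + t)` and `Γ(k + 1/2) = (2k)! √π / (4^k k!)`, the sum becomes
`ε^j (-1)^j π j! (d-j)! / (4^d d!)` times `∑_k (-1)^k C(d,k) C(2k,j) C(2d-2k,d-j)`.
This alternating sum is the coefficient of `x^j y^(d-j)` in
`∑_k (-1)^k C(d,k) (1+x)^(2k) (1+y)^(2d-2k) = ((1+y)^2 - (1+x)^2)^d = (y-x)^d (y+x+2)^d`,
and since `(y-x)^d` is homogeneous of degree `d`, it equals `(-1)^j C(d,j) 2^d`.
-/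

open Finset Polynomial
open scoped Nat

theorem Nat.factorial_two_mul_eq_pow_mul_factorial_mul_doubleFactorial (k : ℕ) :
    (2 * k)! = 2 ^ k * k ! * (2 * k - 1)‼ := by
  cases k with
  | zero => rfl
  | succ k =>
    rw [show 2 * (k + 1) = 2 * k + 1 + 1 by ring, Nat.factorial_eq_mul_doubleFactorial,
      ← Nat.doubleFactorial_two_mul, show 2 * k + 1 + 1 - 1 = 2 * k + 1 by omega]
    ring_nf

theorem Complex.Gamma_nat_add_half (k : ℕ) :
    Complex.Gamma (k + 1 / 2) = (2 * k)! / (4 ^ k * k !) * √Real.pi := by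
  have h := congrArg ((↑) : ℝ → ℂ) (Real.Gamma_nat_add_half k)
  rw [← Complex.Gamma_ofReal] at h
  push_cast at h
  have : (k ! : ℂ) ≠ 0 := by exact_mod_cast k.factorial_ne_zero
  rw [h, Nat.factorial_two_mul_eq_pow_mul_factorial_mul_doubleFactorial,
    show (4 : ℂ) ^ k = 2 ^ k * 2 ^ k by rw [← mul_pow]; norm_num]
  push_cast
  field_simp

theorem Complex.betaIntegral_nat_add_half {k d : ℕ} (hk : k ≤ d) :
    Complex.betaIntegral (k + 1 / 2) (d - k + 1 / 2)
      = Real.pi * (2 * k)! * (2 * (d - k))! / (4 ^ d * k ! * (d - k)! * d !) := by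
  have hdk : (d : ℂ) - k = (d - k : ℕ) := by push_cast [Nat.cast_sub hk]; ring
  have hpos : ∀ n : ℕ, 0 < ((n : ℂ) + 1 / 2).re := fun n => by
    simp only [one_div, Complex.add_re, Complex.natCast_re, Complex.inv_re, Complex.re_ofNat,
      Complex.normSq_ofNat, div_self_mul_self']
    positivity
  have h := Complex.Gamma_mul_Gamma_eq_betaIntegral (hpos k) (hpos (d - k))
  rw [show (k : ℂ) + 1 / 2 + ((d - k : ℕ) + 1 / 2) = d + 1 by push_cast [Nat.cast_sub hk]; ring,
    Complex.Gamma_nat_add_half, Complex.Gamma_nat_add_half, Complex.Gamma_nat_eq_factorial] at h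
  have hπ : (√Real.pi : ℂ) * √Real.pi = Real.pi := by
    rw [← Complex.ofReal_mul, Real.mul_self_sqrt Real.pi_pos.le]
  have h4 : (4 : ℂ) ^ d = 4 ^ k * 4 ^ (d - k) := by rw [← pow_add, Nat.add_sub_cancel' hk]
  have hf : ∀ n : ℕ, (n ! : ℂ) ≠ 0 := fun n => by exact_mod_cast n.factorial_ne_zero
  rw [hdk, eq_div_of_mul_eq (hf d) ((mul_comm _ _).trans h.symm), h4, ← hπ]
  field_simp

theorem Nat.choose_two_mul_sub_mul_factorial_mul_factorial {d j k : ℕ} (hj : j ≤ d) (hk : k ≤ d)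
    (hjk : j ≤ 2 * k) :
    d.choose (2 * k - j) * (2 * k)! * (2 * (d - k))!
      = (2 * k).choose j * (2 * (d - k)).choose (d - j) * d.choose k
        * (j ! * (d - j)! * (k ! * (d - k)!)) := by
  rcases le_or_gt (2 * k - j) d with h | h
  · have e₁ := Nat.choose_mul_factorial_mul_factorial hjk
    have e₂ := Nat.choose_mul_factorial_mul_factorial (show d - j ≤ 2 * (d - k) by omega)
    rw [show 2 * (d - k) - (d - j) = d - (2 * k - j) by omega] at e₂
    calc d.choose (2 * k - j) * (2 * k)! * (2 * (d - k))!
        = (2 * k).choose j * j ! * (2 * (d - k)).choose (d - j) * (d - j)!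
            * (d.choose (2 * k - j) * (2 * k - j)! * (d - (2 * k - j))!) := by
          rw [← e₁, ← e₂]; ring
      _ = (2 * k).choose j * j ! * (2 * (d - k)).choose (d - j) * (d - j)!
            * (d.choose k * k ! * (d - k)!) := by
          rw [Nat.choose_mul_factorial_mul_factorial h, Nat.choose_mul_factorial_mul_factorial hk]
      _ = _ := by ring
  · rw [Nat.choose_eq_zero_of_lt h, Nat.choose_eq_zero_of_lt (show 2 * (d - k) < d - j by omega)]
    simp

theorem sum_range_neg_one_pow_mul_choose_mul_pow_mul_pow {R : Type*} [CommRing R] (a b : R)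
    (d : ℕ) :
    ∑ k ∈ range (d + 1), (-1) ^ k * d.choose k * a ^ (2 * k) * b ^ (2 * (d - k))
      = (b ^ 2 - a ^ 2) ^ d := by
  rw [sub_eq_neg_add, add_pow]
  refine sum_congr rfl fun k _ => ?_
  rw [neg_pow, pow_mul, pow_mul]
  ring

theorem Polynomial.coeff_coeff_X_sub_C_X_pow_mul_X_add_C_pow {R : Type*} [CommRing R] {j d : ℕ}
    (hj : j ≤ d) (q : R[X]) :
    ((((X : R[X][X]) - C X) ^ d * (X + C q) ^ d).coeff (d - j)).coeff j
      = (-1) ^ j * d.choose j * q.coeff 0 ^ d := by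
  have coeff_pow_X_sub_C_X (a : ℕ) :
      (((X : R[X][X]) - C X) ^ d).coeff a
        = C ((-1 : R) ^ (d - a) * d.choose a) * (X : R[X]) ^ (d - a) := by
    rw [sub_eq_add_neg, ← C_neg, coeff_X_add_C_pow, neg_pow]
    simp only [map_mul, map_pow, map_neg, map_one, map_natCast]
    ring
  -- `(Y - x) ^ d` is homogeneous of degree `d`, so only the constant term of `(Y + q) ^ d` reaches
  -- the monomial `x ^ j * Y ^ (d - j)`.
  rw [coeff_mul, finsetSum_coeff, sum_eq_single (d - j, 0)]
  · rw [coeff_pow_X_sub_C_X, coeff_X_add_C_pow, Nat.sub_sub_self hj, Nat.choose_symm hj,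
      mul_assoc, coeff_C_mul, coeff_X_pow_mul', if_pos le_rfl, Nat.sub_self, tsub_zero,
      Nat.choose_zero_right, Nat.cast_one, mul_one, coeff_zero_eq_eval_zero, eval_pow,
      ← coeff_zero_eq_eval_zero]
  · rintro ⟨a, b⟩ hab hne
    rw [HasAntidiagonal.mem_antidiagonal] at hab
    rw [coeff_pow_X_sub_C_X, mul_assoc, coeff_C_mul, coeff_X_pow_mul', if_neg, mul_zero]
    rintro h
    exact hne (by simp only [Prod.mk.injEq]; omega)
  · exact fun h => absurd (HasAntidiagonal.mem_antidiagonal.mpr (add_zero _)) h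

theorem sum_range_neg_one_pow_mul_choose_mul_choose_two_mul {R : Type*} [CommRing R] {d j : ℕ}
    (hj : j ≤ d) :
    ∑ k ∈ range (d + 1),
        (-1 : R) ^ k * d.choose k * (2 * k).choose j * (2 * (d - k)).choose (d - j)
      = (-1) ^ j * 2 ^ d * d.choose j := by
  have h := congrArg (fun p : R[X][X] => (p.coeff (d - j)).coeff j)
    (sum_range_neg_one_pow_mul_choose_mul_pow_mul_pow (C (X + 1)) (X + 1) d)
  have hfactor : ((X : R[X][X]) + 1) ^ 2 - C (X + 1) ^ 2 = (X - C X) * (X + C (X + 2)) := by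
    simp only [map_add, map_one, map_ofNat]
    ring
  simp only [hfactor, mul_pow, coeff_coeff_X_sub_C_X_pow_mul_X_add_C_pow hj] at h
  rw [show (X + 2 : R[X]).coeff 0 = 2 by simp, mul_right_comm] at h
  rw [← h, finsetSum_coeff, finsetSum_coeff]
  refine sum_congr rfl fun k _ => ?_
  have hC : (-1 : R[X][X]) ^ k * (d.choose k : R[X][X]) * C ((X + 1) ^ (2 * k))
      = C (C ((-1 : R) ^ k * d.choose k) * (X + 1) ^ (2 * k)) := by simp
  rw [← C_pow, hC, coeff_C_mul, coeff_X_add_one_pow, coeff_mul_natCast, coeff_C_mul,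
    coeff_X_add_one_pow]

theorem ite_choose_mul_betaIntegral {d j k : ℕ} (hj : j ≤ d) (hk : k ≤ d) :
    (if j ≤ 2 * k then (d.choose (2 * k - j) : ℂ) else 0)
        * Complex.betaIntegral (k + 1 / 2) (d - k + 1 / 2)
      = Real.pi * j ! * (d - j)! / (4 ^ d * d !)
        * ((2 * k).choose j * (2 * (d - k)).choose (d - j) * d.choose k) := by
  have hf : ∀ n : ℕ, (n ! : ℂ) ≠ 0 := fun n => by exact_mod_cast n.factorial_ne_zero
  rw [Complex.betaIntegral_nat_add_half hk]
  split_ifs with hjk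
  · have h := congrArg ((↑) : ℕ → ℂ)
      (Nat.choose_two_mul_sub_mul_factorial_mul_factorial hj hk hjk)
    push_cast at h
    field_simp [hf k, hf (d - k), hf d]
    linear_combination h
  · rw [Nat.choose_eq_zero_of_lt (not_le.mp hjk)]
    simp

open Complex in
theorem stmt3_general (d : ℕ) (m0 : ℤ) (j : ℕ) (hj : j ≤ d) :
    ∑ k ∈ Finset.range (d + 1),
      ((-1 : ℂ) ^ (j + k) * ((Int.sign m0 : ℂ) * Complex.I) ^ j *
        (if j ≤ 2 * k then ((d.choose (2 * k - j) : ℂ)) else 0)) *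
        Complex.betaIntegral ((k : ℂ) + 1 / 2) ((d : ℂ) - (k : ℂ) + 1 / 2)
      = ((Int.sign m0 : ℂ) * Complex.I) ^ j * (2 : ℂ) ^ (-(d : ℤ)) * (Real.pi : ℂ) := by
  set ε : ℂ := Int.sign m0 * I
  have hterm : ∀ k ∈ range (d + 1),
      (-1 : ℂ) ^ (j + k) * ε ^ j * (if j ≤ 2 * k then (d.choose (2 * k - j) : ℂ) else 0)
          * betaIntegral (k + 1 / 2) (d - k + 1 / 2)
        = ε ^ j * (-1) ^ j * (Real.pi * j ! * (d - j)! / (4 ^ d * d !))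
          * ((-1) ^ k * d.choose k * (2 * k).choose j * (2 * (d - k)).choose (d - j)) := by
    intro k hk
    rw [mul_assoc, ite_choose_mul_betaIntegral hj (by simpa [Nat.lt_succ_iff] using hk)]
    ring
  have hfac : (d.choose j : ℂ) * j ! * (d - j)! = d ! := by
    exact_mod_cast Nat.choose_mul_factorial_mul_factorial hj
  have hsign : ((-1 : ℂ) ^ j) ^ 2 = 1 := by rw [← pow_mul, pow_mul', neg_one_sq, one_pow]
  have hf : (d ! : ℂ) ≠ 0 := by exact_mod_cast d.factorial_ne_zero
  rw [sum_congr rfl hterm, ← mul_sum, sum_range_neg_one_pow_mul_choose_mul_choose_two_mul hj,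
    zpow_neg, zpow_natCast, show (4 : ℂ) ^ d = 2 ^ d * 2 ^ d by rw [← mul_pow]; norm_num]
  field_simp
  linear_combination (ε ^ j * j ! * (d - j)! * d.choose j) * hsign + ε ^ j * hfac

open Complex in
theorem stmt3 (d : ℕ) (m0 : ℤ) (hm : m0.natAbs = d) (j : ℕ) (hj : j ≤ d) :
    ∑ k ∈ Finset.range (d + 1),
      ((-1 : ℂ) ^ (j + k) * ((Int.sign m0 : ℂ) * Complex.I) ^ j *
        (if j ≤ 2 * k then ((d.choose (2 * k - j) : ℂ)) else 0)) *
        Complex.betaIntegral ((k : ℂ) + 1 / 2) ((d : ℂ) - (k : ℂ) + 1 / 2)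
      = ((Int.sign m0 : ℂ) * Complex.I) ^ j * (2 : ℂ) ^ (-(d : ℤ)) * (Real.pi : ℂ) :=
  stmt3_general d m0 j hj
end

section
/- Let d be a positive natural number, m ≥ d an integer with m ≡ d (mod 2), and h₁, h₂ > 0 reals. Let F: (0,∞) → ℂ be continuous. For 0 ≤ k ≤ d define f_k(a₁, a₂) = (√h₁ a₁)^{2k+1} (√h₂ a₂)^{2d+1-2k} (h₁a₁² - h₂a₂²)^{(m-d)/2} · ∫₀¹ F(2π h₁ a₁² t + 2π h₂ a₂² (1-t)) · t^{(m-d-1)/2+k} (1-t)^{(m+d-1)/2-k} dt on the region h₁a₁² > h₂a₂². If F is continuously differentiable, then for 0 ≤ k ≤ d-1, with ∂₁ = a₁ ∂/∂a₁ and Δ = h₁a₁² - h₂a₂², one has ∂₁ f_k = -(2k+1) (h₂a₂²/Δ) f_k + (m + d - 1 - 2k) (h₂a₂²/Δ) f_{k+1}. -/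
/-!
Write `f_k(a₁, a₂) = P_k(a₁) · č_k(2π h₁ a₁²)` with the algebraic prefactor `P_k` and
`č_k(A) = ∫₀¹ F(A t + B (1 - t)) t^α (1 - t)^β dt`, `B = 2π h₂ a₂²`. Differentiating under the
integral sign gives `∂č_k/∂A = ∫₀¹ t F'(A t + B (1 - t)) t^α (1 - t)^β dt`. Since
`∂ₜ F(A t + B (1 - t)) = (A - B) F'(…)`, integrating by parts against `t^(α+1) (1 - t)^β`
(which vanishes at both ends) turns this into `(β č_{k+1} - (α + 1) č_k) / (A - B)`, because
`č_{k+1}` has exponents `α + 1` and `β - 1`. The logarithmic derivative of `P_k` is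
`(2k + 1)/a₁ + (m - d) h₁ a₁ / Δ` and `P_{k+1} h₂ a₂² = P_k h₁ a₁²`; collecting terms gives the
relation.
-/

open Real Set MeasureTheory intervalIntegral Metric

theorem intervalIntegrable_rpow_mul_one_sub_rpow_zero_half {p : ℝ} (hp : -1 < p) (q : ℝ) :
    IntervalIntegrable (fun t : ℝ => t ^ p * (1 - t) ^ q) volume 0 (1 / 2) := by
  refine (intervalIntegrable_rpow' hp).mul_continuousOn
    (ContinuousOn.rpow_const (f := fun t => 1 - t) (by fun_prop) fun t ht => Or.inl ?_)
  rw [uIcc_of_le (by norm_num)] at ht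
  linarith [ht.2]

theorem intervalIntegrable_rpow_mul_one_sub_rpow {p q : ℝ} (hp : -1 < p) (hq : -1 < q) :
    IntervalIntegrable (fun t : ℝ => t ^ p * (1 - t) ^ q) volume 0 1 := by
  have upper := (intervalIntegrable_rpow_mul_one_sub_rpow_zero_half hq p).comp_sub_left 1
  norm_num at upper
  refine (intervalIntegrable_rpow_mul_one_sub_rpow_zero_half hp q).trans ?_
  simpa [mul_comm] using upper.symm

theorem IntervalIntegrable.ofReal {f : ℝ → ℝ} {μ : Measure ℝ} {a b : ℝ}
    (hf : IntervalIntegrable f μ a b) : IntervalIntegrable (fun t => (f t : ℂ)) μ a b := by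
  rw [intervalIntegrable_iff] at hf ⊢
  exact hf.ofReal

theorem intervalIntegrable_mul_rpow_mul_one_sub_rpow {g : ℝ → ℂ} (hg : ContinuousOn g (Icc 0 1))
    {p q : ℝ} (hp : -1 < p) (hq : -1 < q) :
    IntervalIntegrable (fun t => g t * ((t ^ p * (1 - t) ^ q : ℝ) : ℂ)) volume 0 1 := by
  refine (intervalIntegrable_rpow_mul_one_sub_rpow hp hq).ofReal.continuousOn_mul ?_
  rwa [uIcc_of_le zero_le_one]

theorem hasDerivAt_rpow_add_one_mul_one_sub_rpow {p q t : ℝ} (ht : t ∈ Ioo 0 1) :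
    HasDerivAt (fun s : ℝ => s ^ (p + 1) * (1 - s) ^ q)
      ((p + 1) * (t ^ p * (1 - t) ^ q) - q * (t ^ (p + 1) * (1 - t) ^ (q - 1))) t := by
  have hleft := Real.hasDerivAt_rpow_const (p := p + 1) (Or.inl ht.1.ne')
  have hright := (Real.hasDerivAt_rpow_const (x := 1 - t) (p := q)
    (Or.inl (sub_ne_zero.2 ht.2.ne'))).comp t ((hasDerivAt_id t).const_sub 1)
  refine (hleft.mul hright).congr_deriv ?_
  simp only [add_sub_cancel_right, Function.comp_apply]
  ring

noncomputable def betaMoment (g : ℝ → ℂ) (p q : ℝ) : ℂ :=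
  ∫ t in (0:ℝ)..1, g t * ((t ^ p * (1 - t) ^ q : ℝ) : ℂ)

theorem betaMoment_of_hasDerivAt {g g' : ℝ → ℂ} (hg : ContinuousOn g (Icc 0 1))
    (hg' : ContinuousOn g' (Icc 0 1)) (hderiv : ∀ t ∈ Ioo 0 1, HasDerivAt g (g' t) t)
    {p q : ℝ} (hp : -1 < p) (hq : 0 < q) :
    betaMoment g' (p + 1) q = q * betaMoment g (p + 1) (q - 1) - (p + 1) * betaMoment g p q := by
  have hp1 : -1 < p + 1 := by linarith
  have hq1 : -1 < q - 1 := by linarith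
  have hq0 : -1 < q := by linarith
  have hv : ContinuousOn (fun t : ℝ => ((t ^ (p + 1) * (1 - t) ^ q : ℝ) : ℂ)) (uIcc 0 1) :=
    Complex.continuous_ofReal.comp_continuousOn
      (((continuous_id.rpow_const fun _ => Or.inr (by linarith)).mul
        ((continuous_const.sub continuous_id).rpow_const fun _ => Or.inr hq.le)).continuousOn)
  have hv' := (((intervalIntegrable_rpow_mul_one_sub_rpow hp hq0).const_mul
    (p + 1)).sub ((intervalIntegrable_rpow_mul_one_sub_rpow hp1 hq1).const_mul q)).ofReal
  have hibp := integral_mul_deriv_eq_deriv_mul_of_hasDerivAt (u := g) (u' := g')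
    (by rwa [uIcc_of_le zero_le_one]) hv (by simpa using hderiv)
    (fun t ht => (hasDerivAt_rpow_add_one_mul_one_sub_rpow (p := p) (q := q)
      (by simpa using ht)).ofReal_comp)
    (hg'.intervalIntegrable_of_Icc zero_le_one) hv'
  have hsplit : (fun t => g t * (((p + 1) * (t ^ p * (1 - t) ^ q)
      - q * (t ^ (p + 1) * (1 - t) ^ (q - 1)) : ℝ) : ℂ)) = fun t =>
      ((p + 1 : ℝ) : ℂ) * (g t * ((t ^ p * (1 - t) ^ q : ℝ) : ℂ))
        - (q : ℂ) * (g t * ((t ^ (p + 1) * (1 - t) ^ (q - 1) : ℝ) : ℂ)) := by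
    funext t
    push_cast
    ring
  rw [hsplit, integral_sub ((intervalIntegrable_mul_rpow_mul_one_sub_rpow hg hp
      hq0).const_mul _) ((intervalIntegrable_mul_rpow_mul_one_sub_rpow hg hp1
      hq1).const_mul _), intervalIntegral.integral_const_mul,
    intervalIntegral.integral_const_mul] at hibp
  simp only [sub_self, Real.zero_rpow hq.ne', Real.zero_rpow (by linarith : p + 1 ≠ 0), mul_zero,
    zero_mul, Complex.ofReal_zero, sub_zero, Complex.ofReal_add, Complex.ofReal_one] at hibp
  unfold betaMoment
  linear_combination hibp

theorem hasDerivAt_deriv_of_pos {F : ℝ → ℂ} (hF : ContDiffOn ℝ 1 F (Ioi 0)) {x : ℝ} (hx : 0 < x) :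
    HasDerivAt F (deriv F x) x :=
  ((hF.differentiableOn_one x hx).differentiableAt (Ioi_mem_nhds hx)).hasDerivAt

theorem lerp_mem_Icc {a b lo hi t : ℝ} (ha : a ∈ Icc lo hi) (hb : b ∈ Icc lo hi)
    (ht : t ∈ Icc (0 : ℝ) 1) : a * t + b * (1 - t) ∈ Icc lo hi := by
  simpa [smul_eq_mul, mul_comm] using
    convex_Icc lo hi ha hb ht.1 (sub_nonneg.2 ht.2) (add_sub_cancel t 1)

theorem hasDerivAt_integral_comp_lerp {F : ℝ → ℂ} (hF : ContDiffOn ℝ 1 F (Ioi 0)) {w : ℝ → ℂ}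
    (hw : IntervalIntegrable w volume 0 1) {A B : ℝ} (hA : 0 < A) (hB : 0 < B) :
    HasDerivAt (fun a => ∫ t in (0:ℝ)..1, F (a * t + B * (1 - t)) * w t)
      (∫ t in (0:ℝ)..1, (t : ℂ) * deriv F (A * t + B * (1 - t)) * w t) A := by
  set lo := min (A / 2) B
  set hi := max (3 * A / 2) B
  have hK : Icc lo hi ⊆ Ioi 0 := fun y hy => (lt_min (half_pos hA) hB).trans_le hy.1
  have hu : ∀ a ∈ ball A (A / 2), ∀ t ∈ Icc (0:ℝ) 1, a * t + B * (1 - t) ∈ Icc lo hi := by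
    intro a ha t ht
    rw [mem_ball, Real.dist_eq, abs_lt] at ha
    exact lerp_mem_Icc
      ⟨(min_le_left _ _).trans (by linarith), (le_max_left _ _).trans' (by linarith)⟩
      ⟨min_le_right _ _, le_max_right _ _⟩ ht
  have hcomp {G : ℝ → ℂ} (hG : ContinuousOn G (Ioi 0)) {a : ℝ} (ha : a ∈ ball A (A / 2)) :
      ContinuousOn (fun t => G (a * t + B * (1 - t))) (Icc 0 1) :=
    hG.comp (by fun_prop) fun t ht => hK (hu a ha t ht)
  have hF' : ContinuousOn (deriv F) (Ioi 0) := hF.continuousOn_deriv_of_isOpen isOpen_Ioi le_rfl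
  obtain ⟨M, hM⟩ := isCompact_Icc.exists_bound_of_continuousOn (hF'.mono hK)
  have hIoc : uIoc (0:ℝ) 1 = Ioc 0 1 := uIoc_of_le zero_le_one
  have hA' : A ∈ ball A (A / 2) := mem_ball_self (half_pos hA)
  have hw_meas : AEStronglyMeasurable w (volume.restrict (Ioc 0 1)) := hw.1.aestronglyMeasurable
  refine (hasDerivAt_integral_of_dominated_loc_of_deriv_le
    (F := fun a t => F (a * t + B * (1 - t)) * w t)
    (F' := fun a t => (t : ℂ) * deriv F (a * t + B * (1 - t)) * w t)
    (bound := fun t => M * ‖w t‖)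
    (ball_mem_nhds A (half_pos hA)) ?_ ?_ ?_ ?_ (hw.norm.const_mul M) ?_).2
  · filter_upwards [ball_mem_nhds A (half_pos hA)] with a ha
    rw [hIoc]
    exact (((hcomp hF.continuousOn ha).mono Ioc_subset_Icc_self).aestronglyMeasurable
      measurableSet_Ioc).mul hw_meas
  · exact hw.continuousOn_mul (by rw [uIcc_of_le zero_le_one]; exact hcomp hF.continuousOn hA')
  · rw [hIoc]
    exact ((((Complex.continuous_ofReal.continuousOn).mul (hcomp hF' hA')).mono
      Ioc_subset_Icc_self).aestronglyMeasurable measurableSet_Ioc).mul hw_meas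
  · refine Filter.Eventually.of_forall fun t ht a ha => ?_
    rw [hIoc] at ht
    have ht1 : ‖(t : ℂ)‖ ≤ 1 := by
      rw [Complex.norm_real, Real.norm_eq_abs, abs_of_pos ht.1]
      exact ht.2
    rw [norm_mul, norm_mul]
    gcongr
    calc ‖(t : ℂ)‖ * ‖deriv F (a * t + B * (1 - t))‖ ≤ 1 * M :=
          mul_le_mul ht1 (hM _ (hu a ha t (Ioc_subset_Icc_self ht))) (norm_nonneg _) zero_le_one
      _ = M := one_mul M
  · refine Filter.Eventually.of_forall fun t ht a ha => ?_
    rw [hIoc] at ht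
    have hpos := hK (hu a ha t (Ioc_subset_Icc_self ht))
    have hlin : HasDerivAt (fun a => a * t + B * (1 - t)) t a := by
      simpa using ((hasDerivAt_id a).mul_const t).add_const (B * (1 - t))
    refine (((hasDerivAt_deriv_of_pos hF hpos).scomp a hlin).mul_const (w t)).congr_deriv ?_
    rw [Complex.real_smul]

theorem hasDerivAt_betaMoment_comp_lerp {F : ℝ → ℂ} (hF : ContDiffOn ℝ 1 F (Ioi 0))
    {p q A B : ℝ} (hp : -1 < p) (hq : 0 < q) (hA : 0 < A) (hB : 0 < B) (hAB : A ≠ B) :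
    HasDerivAt (fun a => betaMoment (fun t => F (a * t + B * (1 - t))) p q)
      ((q * betaMoment (fun t => F (A * t + B * (1 - t))) (p + 1) (q - 1)
        - (p + 1) * betaMoment (fun t => F (A * t + B * (1 - t))) p q) / (A - B)) A := by
  have hu : ∀ t ∈ Icc (0:ℝ) 1, 0 < A * t + B * (1 - t) := fun t ht =>
    (lt_min hA hB).trans_le (lerp_mem_Icc ⟨min_le_left A B, le_max_left A B⟩
      ⟨min_le_right A B, le_max_right A B⟩ ht).1
  have hcomp {G : ℝ → ℂ} (hG : ContinuousOn G (Ioi 0)) :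
      ContinuousOn (fun t => G (A * t + B * (1 - t))) (Icc 0 1) :=
    hG.comp (by fun_prop) hu
  have hderiv : ∀ t ∈ Ioo (0:ℝ) 1, HasDerivAt (fun s => F (A * s + B * (1 - s)))
      (((A - B : ℝ) : ℂ) * deriv F (A * t + B * (1 - t))) t := by
    intro t ht
    have hlin : HasDerivAt (fun s => A * s + B * (1 - s)) (A - B) t := by
      refine (((hasDerivAt_id t).const_mul A).add
        (((hasDerivAt_id t).const_sub 1).const_mul B)).congr_deriv ?_
      simp only [mul_one, mul_neg]
      ring
    rw [← Complex.real_smul]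
    exact (hasDerivAt_deriv_of_pos hF (hu t (Ioo_subset_Icc_self ht))).scomp t hlin
  have hibp := betaMoment_of_hasDerivAt
    (g' := fun t => ((A - B : ℝ) : ℂ) * deriv F (A * t + B * (1 - t))) (hcomp hF.continuousOn)
    (continuousOn_const.mul (hcomp (hF.continuousOn_deriv_of_isOpen isOpen_Ioi le_rfl)))
    hderiv hp hq
  have hweight : betaMoment (fun t => ((A - B : ℝ) : ℂ) * deriv F (A * t + B * (1 - t))) (p + 1) q
      = (∫ t in (0:ℝ)..1,
          (t : ℂ) * deriv F (A * t + B * (1 - t)) * ((t ^ p * (1 - t) ^ q : ℝ) : ℂ))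
        * ((A - B : ℝ) : ℂ) := by
    rw [betaMoment, ← intervalIntegral.integral_mul_const]
    refine integral_congr fun t ht => ?_
    rw [uIcc_of_le zero_le_one] at ht
    simp only [Real.rpow_add_one' ht.1 (by linarith : p + 1 ≠ 0)]
    push_cast
    ring
  have hint := (intervalIntegrable_rpow_mul_one_sub_rpow hp (by linarith : -1 < q)).ofReal
  refine (hasDerivAt_integral_comp_lerp hF hint hA hB).congr_deriv ?_
  rw [eq_div_iff (by exact_mod_cast sub_ne_zero.2 hAB), ← hibp, hweight]
  push_cast
  ring

noncomputable def prefactor (h1 h2 e : ℝ) (d k : ℕ) (a1 a2 : ℝ) : ℝ :=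
  (√h1 * a1) ^ (2 * k + 1) * (√h2 * a2) ^ (2 * d + 1 - 2 * k) * (h1 * a1 ^ 2 - h2 * a2 ^ 2) ^ e

/-- The paper's `č_k(a)` is `confluentIntegral F h1 h2 (α_k - 1) (β_k - 1) a1 a2`. -/
noncomputable def confluentIntegral (F : ℝ → ℂ) (h1 h2 p q a1 a2 : ℝ) : ℂ :=
  betaMoment (fun t => F (2 * π * h1 * a1 ^ 2 * t + 2 * π * h2 * a2 ^ 2 * (1 - t))) p q

theorem prefactor_succ_mul {h1 h2 : ℝ} (hh1 : 0 ≤ h1) (hh2 : 0 ≤ h2) (e : ℝ) {d k : ℕ}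
    (hk : k < d) (a1 a2 : ℝ) :
    prefactor h1 h2 e d (k + 1) a1 a2 * (h2 * a2 ^ 2)
      = prefactor h1 h2 e d k a1 a2 * (h1 * a1 ^ 2) := by
  have hsq {h : ℝ} (hh : 0 ≤ h) (a : ℝ) : (√h * a) ^ 2 = h * a ^ 2 := by
    rw [mul_pow, Real.sq_sqrt hh]
  rw [prefactor, prefactor, ← hsq hh1, ← hsq hh2,
    show 2 * d + 1 - 2 * k = 2 * d + 1 - 2 * (k + 1) + 2 by omega]
  ring

theorem hasDerivAt_prefactor (h1 h2 e : ℝ) (d k : ℕ) {a1 : ℝ} (a2 : ℝ) (ha1 : a1 ≠ 0)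
    (hpos : 0 < h1 * a1 ^ 2 - h2 * a2 ^ 2) :
    HasDerivAt (fun x => prefactor h1 h2 e d k x a2) (prefactor h1 h2 e d k a1 a2 *
      ((2 * k + 1 + 2 * e * h1 * a1 ^ 2 / (h1 * a1 ^ 2 - h2 * a2 ^ 2)) / a1)) a1 := by
  have hpow : HasDerivAt (fun x => (√h1 * x) ^ (2 * k + 1))
      ((2 * k + 1) * (√h1 * a1) ^ (2 * k + 1) / a1) a1 := by
    refine ((hasDerivAt_pow _ _).comp a1 ((hasDerivAt_id a1).const_mul √h1)).congr_deriv ?_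
    rw [id]
    field_simp
    push_cast
    ring
  have hrpow := (Real.hasDerivAt_rpow_const (p := e) (Or.inl hpos.ne')).comp a1
    (((hasDerivAt_pow 2 a1).const_mul h1).sub_const (h2 * a2 ^ 2))
  refine ((hpow.mul_const ((√h2 * a2) ^ (2 * d + 1 - 2 * k))).mul hrpow).congr_deriv ?_
  rw [prefactor, Real.rpow_sub_one hpos.ne', Function.comp_apply]
  field_simp
  push_cast
  ring

theorem hasDerivAt_prefactor_mul_confluentIntegral {F : ℝ → ℂ} (hF : ContDiffOn ℝ 1 F (Ioi 0))
    (h1 h2 e : ℝ) (d k : ℕ) {α β a1 a2 : ℝ} (hα : -1 < α) (hβ : 0 < β) (ha1 : a1 ≠ 0)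
    (hB : 0 < h2 * a2 ^ 2) (hlt : h2 * a2 ^ 2 < h1 * a1 ^ 2) :
    HasDerivAt (fun x => (prefactor h1 h2 e d k x a2 : ℂ) * confluentIntegral F h1 h2 α β x a2)
      (prefactor h1 h2 e d k a1 a2 *
        (((2 * k + 1 + 2 * e * h1 * a1 ^ 2 / (h1 * a1 ^ 2 - h2 * a2 ^ 2))
            * confluentIntegral F h1 h2 α β a1 a2
          + 2 * h1 * a1 ^ 2 / (h1 * a1 ^ 2 - h2 * a2 ^ 2)
            * (β * confluentIntegral F h1 h2 (α + 1) (β - 1) a1 a2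
              - (α + 1) * confluentIntegral F h1 h2 α β a1 a2)) / a1))
      a1 := by
  have hΔ : 0 < h1 * a1 ^ 2 - h2 * a2 ^ 2 := sub_pos.2 hlt
  have hAB : 2 * π * h1 * a1 ^ 2 - 2 * π * h2 * a2 ^ 2
      = 2 * π * (h1 * a1 ^ 2 - h2 * a2 ^ 2) := by
    ring
  have hM := hasDerivAt_betaMoment_comp_lerp hF hα hβ (A := 2 * π * h1 * a1 ^ 2)
    (B := 2 * π * h2 * a2 ^ 2) (by nlinarith [pi_pos]) (by nlinarith [pi_pos])
    (sub_ne_zero.1 (by rw [hAB]; positivity))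
  have hA : HasDerivAt (fun x => 2 * π * h1 * x ^ 2) (2 * π * h1 * (2 * a1)) a1 := by
    simpa using (hasDerivAt_pow 2 a1).const_mul (2 * π * h1)
  refine ((hasDerivAt_prefactor h1 h2 e d k a2 ha1 hΔ).ofReal_comp.mul
    (hM.scomp a1 hA)).congr_deriv ?_
  rw [Complex.real_smul, Function.comp_apply]
  unfold confluentIntegral
  push_cast
  field_simp

theorem mul_deriv_prefactor_mul_confluentIntegral {F : ℝ → ℂ} (hF : ContDiffOn ℝ 1 F (Ioi 0))
    {h1 h2 : ℝ} (hh1 : 0 < h1) (hh2 : 0 < h2) {m : ℝ} {d k : ℕ} (hmd : d ≤ m) (hk : k < d)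
    {a1 a2 : ℝ} (ha1 : a1 ≠ 0) (ha2 : 0 < a2) (hlt : h2 * a2 ^ 2 < h1 * a1 ^ 2) :
    (a1 : ℂ) * deriv (fun x => (prefactor h1 h2 ((m - d) / 2) d k x a2 : ℂ) *
        confluentIntegral F h1 h2 ((m - d - 1) / 2 + k) ((m + d - 1) / 2 - k) x a2) a1
      = -(2 * k + 1) * ((h2 * a2 ^ 2 / (h1 * a1 ^ 2 - h2 * a2 ^ 2) : ℝ) : ℂ)
          * (prefactor h1 h2 ((m - d) / 2) d k a1 a2
            * confluentIntegral F h1 h2 ((m - d - 1) / 2 + k) ((m + d - 1) / 2 - k) a1 a2)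
        + (m + d - 1 - 2 * k) * ((h2 * a2 ^ 2 / (h1 * a1 ^ 2 - h2 * a2 ^ 2) : ℝ) : ℂ)
          * (prefactor h1 h2 ((m - d) / 2) d (k + 1) a1 a2
            * confluentIntegral F h1 h2 ((m - d - 1) / 2 + k + 1) ((m + d - 1) / 2 - k - 1)
              a1 a2) := by
  have hkR : (k : ℝ) + 1 ≤ d := by exact_mod_cast hk
  set e : ℝ := (m - d) / 2 with he
  set α : ℝ := (m - d - 1) / 2 + k with hα
  set β : ℝ := (m + d - 1) / 2 - k with hβ
  have hderiv := hasDerivAt_prefactor_mul_confluentIntegral hF h1 h2 e d k (α := α) (β := β)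
    (by linarith) (by linarith) ha1 (by positivity) hlt
  rw [hderiv.deriv, mul_div_assoc', mul_div_cancel₀ _ (Complex.ofReal_ne_zero.2 ha1)]
  have hΔ : h1 * a1 ^ 2 - h2 * a2 ^ 2 ≠ 0 := (sub_pos.2 hlt).ne'
  have hcoeff : 2 * k + 1 + 2 * e * h1 * a1 ^ 2 / (h1 * a1 ^ 2 - h2 * a2 ^ 2)
      - 2 * h1 * a1 ^ 2 / (h1 * a1 ^ 2 - h2 * a2 ^ 2) * (α + 1)
      = -(2 * k + 1) * (h2 * a2 ^ 2 / (h1 * a1 ^ 2 - h2 * a2 ^ 2)) := by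
    rw [he, hα]
    field_simp
    ring
  have hcoeff_succ :
      2 * h1 * a1 ^ 2 / (h1 * a1 ^ 2 - h2 * a2 ^ 2) * β * prefactor h1 h2 e d k a1 a2
      = (m + d - 1 - 2 * k) * (h2 * a2 ^ 2 / (h1 * a1 ^ 2 - h2 * a2 ^ 2))
        * prefactor h1 h2 e d (k + 1) a1 a2 := by
    calc _ = (m + d - 1 - 2 * k) / (h1 * a1 ^ 2 - h2 * a2 ^ 2)
          * (prefactor h1 h2 e d k a1 a2 * (h1 * a1 ^ 2)) := by
          rw [hβ]
          field_simp
      _ = _ := by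
          rw [← prefactor_succ_mul hh1.le hh2.le e hk a1 a2]
          ring
  linear_combination (norm := (push_cast; ring))
    (prefactor h1 h2 e d k a1 a2 * confluentIntegral F h1 h2 α β a1 a2)
      * congrArg Complex.ofReal hcoeff
    + confluentIntegral F h1 h2 (α + 1) (β - 1) a1 a2 * congrArg Complex.ofReal hcoeff_succ

theorem stmt7_general (d : ℕ) (m : ℤ) (hmd : (d : ℤ) ≤ m)
    (h1 h2 : ℝ) (hh1 : 0 < h1) (hh2 : 0 < h2)
    (F : ℝ → ℂ) (hF : ContDiffOn ℝ 1 F (Set.Ioi 0))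
    (f : ℕ → ℝ → ℝ → ℂ)
    (hf : ∀ (k : ℕ) (a1 a2 : ℝ), k ≤ d → f k a1 a2 =
      (((Real.sqrt h1 * a1) ^ (2 * k + 1) * (Real.sqrt h2 * a2) ^ (2 * d + 1 - 2 * k) *
        (h1 * a1 ^ 2 - h2 * a2 ^ 2) ^ (((m : ℝ) - (d : ℝ)) / 2) : ℝ) : ℂ) *
      ∫ t in (0:ℝ)..1,
        F (2 * Real.pi * h1 * a1 ^ 2 * t + 2 * Real.pi * h2 * a2 ^ 2 * (1 - t)) *
        ((t ^ (((m : ℝ) - (d : ℝ) - 1) / 2 + (k : ℝ)) *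
          (1 - t) ^ (((m : ℝ) + (d : ℝ) - 1) / 2 - (k : ℝ)) : ℝ) : ℂ)) :
    ∀ k < d, ∀ a1 a2 : ℝ, 0 < a1 → 0 < a2 → h2 * a2 ^ 2 < h1 * a1 ^ 2 →
      (a1 : ℂ) * deriv (fun x : ℝ => f k x a2) a1 =
        -(2 * (k : ℂ) + 1) * (((h2 * a2 ^ 2) / (h1 * a1 ^ 2 - h2 * a2 ^ 2) : ℝ) : ℂ) *
            f k a1 a2 +
        ((m : ℂ) + (d : ℂ) - 1 - 2 * (k : ℂ)) *
            (((h2 * a2 ^ 2) / (h1 * a1 ^ 2 - h2 * a2 ^ 2) : ℝ) : ℂ) * f (k + 1) a1 a2 := by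
  intro k hk a1 a2 ha1 ha2 hlt
  have hfun : (fun x => f k x a2) = fun x => (prefactor h1 h2 ((m - d) / 2) d k x a2 : ℂ) *
      confluentIntegral F h1 h2 ((m - d - 1) / 2 + k) ((m + d - 1) / 2 - k) x a2 :=
    funext fun x => hf k x a2 hk.le
  have hfk : f k a1 a2 = (prefactor h1 h2 ((m - d) / 2) d k a1 a2 : ℂ) *
      confluentIntegral F h1 h2 ((m - d - 1) / 2 + k) ((m + d - 1) / 2 - k) a1 a2 :=
    hf k a1 a2 hk.le
  have hfk1 : f (k + 1) a1 a2 = (prefactor h1 h2 ((m - d) / 2) d (k + 1) a1 a2 : ℂ) *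
      confluentIntegral F h1 h2 ((m - d - 1) / 2 + k + 1) ((m + d - 1) / 2 - k - 1) a1 a2 := by
    rw [hf (k + 1) a1 a2 hk, Nat.cast_succ, ← add_assoc, ← sub_sub]
    rfl
  rw [hfun, hfk, hfk1, mul_deriv_prefactor_mul_confluentIntegral hF hh1 hh2
    (by exact_mod_cast hmd) hk ha1.ne' ha2 hlt]
  push_cast
  ring

theorem stmt7 (d : ℕ) (hd : 1 ≤ d) (m : ℤ) (hmd : (d : ℤ) ≤ m) (hpar : m % 2 = (d : ℤ) % 2)
    (h1 h2 : ℝ) (hh1 : 0 < h1) (hh2 : 0 < h2)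
    (F : ℝ → ℂ) (hFc : ContinuousOn F (Set.Ioi 0)) (hF : ContDiffOn ℝ 1 F (Set.Ioi 0))
    (f : ℕ → ℝ → ℝ → ℂ)
    (hf : ∀ (k : ℕ) (a1 a2 : ℝ), k ≤ d → f k a1 a2 =
      (((Real.sqrt h1 * a1) ^ (2 * k + 1) * (Real.sqrt h2 * a2) ^ (2 * d + 1 - 2 * k) *
        (h1 * a1 ^ 2 - h2 * a2 ^ 2) ^ (((m : ℝ) - (d : ℝ)) / 2) : ℝ) : ℂ) *
      ∫ t in (0:ℝ)..1,
        F (2 * Real.pi * h1 * a1 ^ 2 * t + 2 * Real.pi * h2 * a2 ^ 2 * (1 - t)) *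
        ((t ^ (((m : ℝ) - (d : ℝ) - 1) / 2 + (k : ℝ)) *
          (1 - t) ^ (((m : ℝ) + (d : ℝ) - 1) / 2 - (k : ℝ)) : ℝ) : ℂ)) :
    ∀ k < d, ∀ a1 a2 : ℝ, 0 < a1 → 0 < a2 → h2 * a2 ^ 2 < h1 * a1 ^ 2 →
      (a1 : ℂ) * deriv (fun x : ℝ => f k x a2) a1 =
        -(2 * (k : ℂ) + 1) * (((h2 * a2 ^ 2) / (h1 * a1 ^ 2 - h2 * a2 ^ 2) : ℝ) : ℂ) *
            f k a1 a2 +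
        ((m : ℂ) + (d : ℂ) - 1 - 2 * (k : ℂ)) *
            (((h2 * a2 ^ 2) / (h1 * a1 ^ 2 - h2 * a2 ^ 2) : ℝ) : ℂ) * f (k + 1) a1 a2 :=
  stmt7_general d m hmd h1 h2 hh1 hh2 F hF f hf
end

section
/- Let d ≥ 1 and t be a real number with t > d (playing the role of |m₀|). Define x_{0,k} = (-1)^k · C(d, 2k) · ∏_{l=1}^{k} (2l-1)/(t - d + 2l - 1) for 0 ≤ k ≤ d. Then the sequence {x_{0,k}} satisfies the fourth-order recurrence: -2(k+1)(t-d+2k+1)(t-d+2k-1) x_{0,k+1} + (2k(4d-6k+3) - d(d-1))(t-d+2k-1) x_{0,k} + [2(d-2k+2)(d(d-1) - (2k-2)(2d-2k+3)) + (2k-2)(t+d-2k+1)(t-d+2k-1)] x_{0,k-1} + (d-2k+4)(d-2k+3)(t+d-2k+3) x_{0,k-2} = 0 for all k with the convention x_{0,k} = 0 for k < 0 or k > d (and C(d, n) = 0 for n > d or n < 0). -/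
/-!
With `s = t - d`, the terms satisfy the first-order recurrence
`R(k) : (2k+2)(s+2k+1) x_{k+1} + (d-2k)(d-2k-1) x_k = 0` for every integer `k`: the ratio
`x_{k+1}/x_k` is `C(d,2k+2)/C(d,2k)` times the new factor `-(2k+1)/(s+2k+1)`, and at `k = -1` the
coefficient of `x_0` vanishes. The fourth-order recurrence is the combination
`-(s+2k-1) R(k) + 2(d-2k+2) R(k-1) + (t+d-2k+3) R(k-2)`.
-/

open Finset

theorem Nat.cast_choose_succ_right_eq {R : Type*} [CommRing R] (n k : ℕ) :
    (n.choose (k + 1) : R) * (k + 1) = n.choose k * (n - k) := by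
  rcases lt_or_ge k n with hk | hk
  · have h := congrArg (Nat.cast : ℕ → R) (Nat.choose_succ_right_eq n k)
    push_cast [Nat.cast_sub hk.le] at h
    exact h
  · rcases hk.eq_or_lt with rfl | hk
    · simp
    · simp [Nat.choose_eq_zero_of_lt hk, Nat.choose_eq_zero_of_lt (Nat.lt_succ_of_lt hk)]

theorem Nat.cast_choose_add_two_mul {R : Type*} [CommRing R] (n k : ℕ) :
    (n.choose (k + 2) : R) * (k + 2) * (k + 1) = n.choose k * (n - k) * (n - k - 1) := by
  have h₁ := Nat.cast_choose_succ_right_eq (R := R) n k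
  have h₂ := Nat.cast_choose_succ_right_eq (R := R) n (k + 1)
  push_cast at h₂
  linear_combination (k + 1 : R) * h₂ + (n - k - 1 : R) * h₁

section EvenChoose

variable (d : ℕ) (s : ℝ)

noncomputable def oddRatioProd (n : ℕ) : ℝ :=
  ∏ l ∈ Icc 1 n, (2 * (l : ℝ) - 1) / (s + 2 * l - 1)

theorem oddRatioProd_succ {n : ℕ} (hs : s + 2 * n + 1 ≠ 0) :
    (s + 2 * n + 1) * oddRatioProd s (n + 1) = (2 * n + 1) * oddRatioProd s n := by
  rw [oddRatioProd, prod_Icc_succ_top (Nat.le_add_left 1 n), ← oddRatioProd]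
  push_cast
  rw [show s + 2 * ((n : ℝ) + 1) - 1 = s + 2 * n + 1 by ring,
    show 2 * ((n : ℝ) + 1) - 1 = 2 * n + 1 by ring]
  field_simp

noncomputable def evenChooseSeq (n : ℕ) : ℝ :=
  (-1) ^ n * d.choose (2 * n) * oddRatioProd s n

theorem evenChooseSeq_eq_zero_of_lt {n : ℕ} (hn : d < n) : evenChooseSeq d s n = 0 := by
  simp [evenChooseSeq, Nat.choose_eq_zero_of_lt (by omega : d < 2 * n)]

theorem evenChooseSeq_succ {n : ℕ} (hs : s + 2 * n + 1 ≠ 0) :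
    (2 * n + 2) * (s + 2 * n + 1) * evenChooseSeq d s (n + 1)
      + (d - 2 * n) * (d - 2 * n - 1) * evenChooseSeq d s n = 0 := by
  have hP := oddRatioProd_succ s hs
  have hC := Nat.cast_choose_add_two_mul (R := ℝ) d (2 * n)
  simp only [evenChooseSeq, pow_succ, mul_add, mul_one]
  push_cast at hC ⊢
  linear_combination (-1) ^ n * (-(2 * n + 2) * (d.choose (2 * n + 2) : ℝ) * hP
    - oddRatioProd s n * hC)

theorem evenChooseSeq_recurrence_int (hs : -1 < s) {x : ℤ → ℝ}
    (hx : ∀ k : ℤ, x k = if 0 ≤ k then evenChooseSeq d s k.toNat else 0) (k : ℤ) :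
    (2 * k + 2) * (s + 2 * k + 1) * x (k + 1) + (d - 2 * k) * (d - 2 * k - 1) * x k = 0 := by
  rcases lt_or_ge k 0 with hk | hk
  · have hx₀ : x k = 0 := by simp [hx k, hk.not_ge]
    have hx₁ : ((k : ℝ) + 1) * x (k + 1) = 0 := by
      rcases (Int.add_one_le_of_lt hk).eq_or_lt with hk' | hk'
      · simp [show (k : ℝ) + 1 = 0 by exact_mod_cast hk']
      · simp [hx (k + 1), hk'.not_ge]
    linear_combination 2 * (s + 2 * k + 1) * hx₁ + (d - 2 * k) * (d - 2 * k - 1) * hx₀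
  · lift k to ℕ using hk
    have hpos : 0 < s + 2 * k + 1 := by linarith [(k.cast_nonneg : (0 : ℝ) ≤ k)]
    have h := evenChooseSeq_succ d s hpos.ne'
    simpa [hx, show (0 : ℤ) ≤ k + 1 by omega] using h

end EvenChoose

theorem stmt9_general (d : ℕ) (t : ℝ) (ht : (d : ℝ) < t)
    (x : ℤ → ℝ)
    (hx : ∀ k : ℤ, x k = if 0 ≤ k ∧ k ≤ (d : ℤ) then
      (-1 : ℝ) ^ (k.toNat) * (Nat.choose d (2 * k.toNat)) *
        ∏ l ∈ Finset.Icc 1 k.toNat, (2 * (l : ℝ) - 1) / (t - (d : ℝ) + 2 * (l : ℝ) - 1)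
      else 0) :
    ∀ k : ℤ,
      -2 * ((k : ℝ) + 1) * (t - (d : ℝ) + 2 * (k : ℝ) + 1) * (t - (d : ℝ) + 2 * (k : ℝ) - 1) *
          x (k + 1)
      + (2 * (k : ℝ) * (4 * (d : ℝ) - 6 * (k : ℝ) + 3) - (d : ℝ) * ((d : ℝ) - 1)) *
          (t - (d : ℝ) + 2 * (k : ℝ) - 1) * x k
      + (2 * ((d : ℝ) - 2 * (k : ℝ) + 2) *
            ((d : ℝ) * ((d : ℝ) - 1) - (2 * (k : ℝ) - 2) * (2 * (d : ℝ) - 2 * (k : ℝ) + 3))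
          + (2 * (k : ℝ) - 2) * (t + (d : ℝ) - 2 * (k : ℝ) + 1) *
            (t - (d : ℝ) + 2 * (k : ℝ) - 1)) * x (k - 1)
      + ((d : ℝ) - 2 * (k : ℝ) + 4) * ((d : ℝ) - 2 * (k : ℝ) + 3) *
          (t + (d : ℝ) - 2 * (k : ℝ) + 3) * x (k - 2)
      = 0 := by
  have hx' : ∀ k : ℤ, x k = if 0 ≤ k then evenChooseSeq d (t - d) k.toNat else 0 := by
    intro k
    rw [hx k]
    by_cases hk : 0 ≤ k
    · by_cases hkd : k ≤ d
      · rw [if_pos ⟨hk, hkd⟩, if_pos hk]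
        rfl
      · simp [hk, hkd, evenChooseSeq_eq_zero_of_lt d (t - d) (n := k.toNat) (by omega)]
    · simp [hk]
  have R := evenChooseSeq_recurrence_int d (t - d) (by linarith) hx'
  intro k
  have R₁ := R (k - 1)
  have R₂ := R (k - 2)
  rw [sub_add_cancel] at R₁
  rw [show k - 2 + 1 = k - 1 by ring] at R₂
  push_cast at R₁ R₂
  linear_combination
    -(t - d + 2 * k - 1) * R k + 2 * (d - 2 * k + 2) * R₁ + (t + d - 2 * k + 3) * R₂

theorem stmt9 (d : ℕ) (hd : 1 ≤ d) (t : ℝ) (ht : (d : ℝ) < t)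
    (x : ℤ → ℝ)
    (hx : ∀ k : ℤ, x k = if 0 ≤ k ∧ k ≤ (d : ℤ) then
      (-1 : ℝ) ^ (k.toNat) * (Nat.choose d (2 * k.toNat)) *
        ∏ l ∈ Finset.Icc 1 k.toNat, (2 * (l : ℝ) - 1) / (t - (d : ℝ) + 2 * (l : ℝ) - 1)
      else 0) :
    ∀ k : ℤ,
      -2 * ((k : ℝ) + 1) * (t - (d : ℝ) + 2 * (k : ℝ) + 1) * (t - (d : ℝ) + 2 * (k : ℝ) - 1) *
          x (k + 1)
      + (2 * (k : ℝ) * (4 * (d : ℝ) - 6 * (k : ℝ) + 3) - (d : ℝ) * ((d : ℝ) - 1)) *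
          (t - (d : ℝ) + 2 * (k : ℝ) - 1) * x k
      + (2 * ((d : ℝ) - 2 * (k : ℝ) + 2) *
            ((d : ℝ) * ((d : ℝ) - 1) - (2 * (k : ℝ) - 2) * (2 * (d : ℝ) - 2 * (k : ℝ) + 3))
          + (2 * (k : ℝ) - 2) * (t + (d : ℝ) - 2 * (k : ℝ) + 1) *
            (t - (d : ℝ) + 2 * (k : ℝ) - 1)) * x (k - 1)
      + ((d : ℝ) - 2 * (k : ℝ) + 4) * ((d : ℝ) - 2 * (k : ℝ) + 3) *
          (t + (d : ℝ) - 2 * (k : ℝ) + 3) * x (k - 2)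
      = 0 :=
  stmt9_general d t ht x hx
end
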